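/- arXiv:1506.05815 — 2 statements merged into one kernel-verified Lean document; each statement's English description precedes it below -/
import Mathlib

section
/- For 1 ≤ m < n ≤ N, the vector U₁^σ⋯U_N^σ ζ^{(m,n)}, where ζ^{(m,n)} has α₁ in position m and α₂ in position n and zeros elsewhere, has components: position 0: c^N g w (gz)^{m-1}(α₁ + (gz)^{n-m} α₂); positions 1 ≤ k < m: c^N (gz)^{m-k-1}(gw)²(α₁ + (gz)^{n-m}α₂); position m: c^N (g z⁻ α₁ + (gw)²(gz)^{n-m-1} α₂); positions m < k < n: c^N (gz)^{n-k-1}(gw)² α₂; position n: c^N g z⁻ α₂; positions k > n: 0. -/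
/-! `U_ℓ` acts on the coordinates `0` and `ℓ` by the block `c g [[z, w], [w, z⁻]]` and multiplies
every other coordinate by `c`. Since `ζ^{(m,n)} = α₁ e_m + α₂ e_n`, it suffices to compute
`U₁ ⋯ U_N e_n`. The factors `U_ℓ` with `ℓ ≠ n` scale `e_n` by `c`, `U_n e_n = c g (w e₀ + z⁻ e_n)`,
and `U₁ ⋯ U_p e₀ = c^p ((g z)^p e₀ + ∑_{1 ≤ k ≤ p} (g z)^{p-k} g w e_k)`, because
`U_{p+1} e₀ = c g (z e₀ + w e_{p+1})` while `U₁, …, U_p` only scale `e_{p+1}`. -/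

/-- The one-step evolution matrix `U_ℓ^σ` of size `(N+1)×(N+1)`. -/
def Umat (N ℓ : ℕ) (c g w z zm : ℂ) : Matrix (Fin (N + 1)) (Fin (N + 1)) ℂ :=
  fun i j =>
    if (i : ℕ) = 0 then
      c * g * ((if (j : ℕ) = 0 then z else 0) + (if (j : ℕ) = ℓ then w else 0))
    else if (i : ℕ) = ℓ then
      c * g * ((if (j : ℕ) = 0 then w else 0) + (if (j : ℕ) = ℓ then zm else 0))
    else if i = j then c else 0

open Matrix

lemma List.prod_mulVec_of_forall_mulVec_eq_smul {n R : Type*} [Fintype n] [DecidableEq n]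
    [CommSemiring R] (L : List (Matrix n n R)) (v : n → R) (c : R) (h : ∀ M ∈ L, M *ᵥ v = c • v) :
    L.prod *ᵥ v = c ^ L.length • v := by
  induction L with
  | nil => simp
  | cons M L ih =>
    rw [List.prod_cons, ← mulVec_mulVec, ih fun M' hM' => h M' (List.mem_cons_of_mem M hM'),
      mulVec_smul, h M List.mem_cons_self, smul_smul, List.length_cons, pow_succ]

/-- `e_a`, indexed by a natural number; it is `0` when `a > N`. -/
def unitVec (N a : ℕ) : Fin (N + 1) → ℂ := fun j => if (j : ℕ) = a then 1 else 0

lemma mulVec_unitVec {N : ℕ} (M : Matrix (Fin (N + 1)) (Fin (N + 1)) ℂ) (a : ℕ)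
    (k : Fin (N + 1)) :
    (M *ᵥ unitVec N a) k = if h : a < N + 1 then M k ⟨a, h⟩ else 0 := by
  split_ifs with h
  · rw [mulVec, dotProduct, Finset.sum_eq_single ⟨a, h⟩] <;> intros <;>
      simp_all [unitVec, Fin.ext_iff]
  · have : unitVec N a = 0 := funext fun j => if_neg (by omega)
    simp [this]

section Umat

variable (N : ℕ) (c g w z zm : ℂ)

lemma Umat_mulVec_unitVec_zero {ℓ : ℕ} (hℓ : ℓ ≠ 0) :
    Umat N ℓ c g w z zm *ᵥ unitVec N 0 = (c * g) • (z • unitVec N 0 + w • unitVec N ℓ) := by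
  funext k
  simp only [mulVec_unitVec, Umat, unitVec, Pi.add_apply, Pi.smul_apply, smul_eq_mul, Fin.ext_iff]
  split_ifs <;> first | (exfalso; omega) | simp

lemma Umat_mulVec_unitVec_self {ℓ : ℕ} (hℓ : ℓ ≠ 0) (hℓN : ℓ ≤ N) :
    Umat N ℓ c g w z zm *ᵥ unitVec N ℓ = (c * g) • (w • unitVec N 0 + zm • unitVec N ℓ) := by
  funext k
  simp only [mulVec_unitVec, Umat, unitVec, Pi.add_apply, Pi.smul_apply, smul_eq_mul, Fin.ext_iff]
  split_ifs <;> first | (exfalso; omega) | simp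

lemma Umat_mulVec_unitVec_of_ne {ℓ j : ℕ} (hj : j ≠ 0) (hjℓ : ℓ ≠ j) :
    Umat N ℓ c g w z zm *ᵥ unitVec N j = c • unitVec N j := by
  funext k
  simp only [mulVec_unitVec, Umat, unitVec, Pi.smul_apply, smul_eq_mul, Fin.ext_iff]
  split_ifs <;> first | (exfalso; omega) | simp

lemma Umat_prod_mulVec_unitVec_of_forall_ne (L : List ℕ) {j : ℕ} (hj : j ≠ 0)
    (hL : ∀ ℓ ∈ L, ℓ + 1 ≠ j) :
    (L.map fun ℓ => Umat N (ℓ + 1) c g w z zm).prod *ᵥ unitVec N j =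
      c ^ L.length • unitVec N j := by
  rw [List.prod_mulVec_of_forall_mulVec_eq_smul, List.length_map]
  intro M hM
  obtain ⟨ℓ, hℓ, rfl⟩ := List.mem_map.1 hM
  exact Umat_mulVec_unitVec_of_ne N c g w z zm hj (hL ℓ hℓ)

lemma Umat_prod_range_mulVec_unitVec_zero (p : ℕ) (k : Fin (N + 1)) :
    (((List.range p).map fun ℓ => Umat N (ℓ + 1) c g w z zm).prod *ᵥ unitVec N 0) k =
      c ^ p * if (k : ℕ) = 0 then (g * z) ^ p
        else if (k : ℕ) ≤ p then (g * z) ^ (p - k) * (g * w) else 0 := by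
  induction p generalizing k with
  | zero => simp +contextual [unitVec]
  | succ p ih =>
    have hfix := Umat_prod_mulVec_unitVec_of_forall_ne N c g w z zm (List.range p)
      (j := p + 1) (by omega) (fun ℓ hℓ => by have := List.mem_range.1 hℓ; omega)
    rw [List.range_succ, List.map_append, List.prod_append, ← mulVec_mulVec, List.map_singleton,
      List.prod_singleton, Umat_mulVec_unitVec_zero N c g w z zm (by omega), mulVec_smul,
      mulVec_add, mulVec_smul, mulVec_smul, hfix, List.length_range]
    simp only [Pi.smul_apply, Pi.add_apply, smul_eq_mul, ih, unitVec]
    split_ifs <;> try (exfalso; omega)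
    · ring
    · rw [show p + 1 - (k : ℕ) = p - k + 1 by omega]
      ring
    · rw [show p + 1 - (k : ℕ) = 0 by omega]
      ring
    · ring

lemma Umat_prod_mulVec_unitVec {n : ℕ} (hn : 1 ≤ n) (hnN : n ≤ N) (k : Fin (N + 1)) :
    (((List.range N).map fun ℓ => Umat N (ℓ + 1) c g w z zm).prod *ᵥ unitVec N n) k =
      c ^ N * if (k : ℕ) = 0 then g * w * (g * z) ^ (n - 1)
        else if (k : ℕ) < n then (g * z) ^ (n - k - 1) * (g * w) ^ 2
        else if (k : ℕ) = n then g * zm else 0 := by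
  obtain ⟨p, rfl⟩ : ∃ p, n = p + 1 := ⟨n - 1, by omega⟩
  have hsplit :
      List.range N = List.range p ++ [p] ++ (List.range (N - (p + 1))).map (p + 1 + ·) := by
    rw [← List.range_succ, ← List.range_add, Nat.add_sub_cancel' hnN]
  have hhead := Umat_prod_mulVec_unitVec_of_forall_ne N c g w z zm (List.range p)
    (j := p + 1) (by omega) (fun ℓ hℓ => by have := List.mem_range.1 hℓ; omega)
  have htail := Umat_prod_mulVec_unitVec_of_forall_ne N c g w z zm
    ((List.range (N - (p + 1))).map (p + 1 + ·)) (j := p + 1) (by omega)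
    (fun ℓ hℓ => by obtain ⟨i, -, rfl⟩ := List.mem_map.1 hℓ; omega)
  have hpow : c ^ N = c ^ (N - (p + 1)) * c * c ^ p := by
    rw [← pow_succ, ← pow_add]
    congr 1
    omega
  rw [hsplit, List.map_append, List.map_append, List.prod_append, List.prod_append,
    ← mulVec_mulVec, htail, mulVec_smul, ← mulVec_mulVec, List.map_singleton, List.prod_singleton,
    Umat_mulVec_unitVec_self N c g w z zm (by omega) hnN, mulVec_smul, mulVec_add, mulVec_smul,
    mulVec_smul, hhead]
  simp only [Pi.smul_apply, Pi.add_apply, smul_eq_mul, Umat_prod_range_mulVec_unitVec_zero,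
    unitVec, List.length_map, List.length_range, Nat.sub_right_comm _ (k : ℕ) 1,
    Nat.add_sub_cancel, hpow]
  split_ifs <;> try (exfalso; omega)
  all_goals ring

end Umat

/-- components of `U₁^σ⋯U_N^σ ζ^{(m,n)}`, where `ζ^{(m,n)}` has `α₁`
at position `m`, `α₂` at position `n` (`1 ≤ m < n ≤ N`) and zeros elsewhere. -/
theorem Umat_prod_zeta_mn (N m n : ℕ) (hm : 1 ≤ m) (hmn : m < n) (hnN : n ≤ N)
    (c g w z zm : ℂ) (α₁ α₂ : ℂ) (k : Fin (N + 1)) :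
    Matrix.mulVec (((List.range N).map (fun ℓ => Umat N (ℓ + 1) c g w z zm)).prod)
        (fun j => if (j : ℕ) = m then α₁ else if (j : ℕ) = n then α₂ else 0) k
      = if (k : ℕ) = 0 then
          c ^ N * g * w * (g * z) ^ (m - 1) * (α₁ + (g * z) ^ (n - m) * α₂)
        else if (k : ℕ) < m then
          c ^ N * (g * z) ^ (m - (k : ℕ) - 1) * (g * w) ^ 2 * (α₁ + (g * z) ^ (n - m) * α₂)
        else if (k : ℕ) = m then
          c ^ N * (g * zm * α₁ + (g * w) ^ 2 * (g * z) ^ (n - m - 1) * α₂)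
        else if (k : ℕ) < n then
          c ^ N * (g * z) ^ (n - (k : ℕ) - 1) * (g * w) ^ 2 * α₂
        else if (k : ℕ) = n then
          c ^ N * g * zm * α₂
        else 0 := by
  have hζ : (fun j : Fin (N + 1) => if (j : ℕ) = m then α₁ else if (j : ℕ) = n then α₂ else 0) =
      α₁ • unitVec N m + α₂ • unitVec N n := by
    funext j
    simp only [unitVec, Pi.add_apply, Pi.smul_apply, smul_eq_mul]
    split_ifs <;> first | (exfalso; omega) | simp
  rw [hζ, mulVec_add, mulVec_smul, mulVec_smul, Pi.add_apply, Pi.smul_apply, Pi.smul_apply,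
    Umat_prod_mulVec_unitVec N c g w z zm hm (by omega),
    Umat_prod_mulVec_unitVec N c g w z zm (by omega) hnN, smul_eq_mul, smul_eq_mul]
  split_ifs <;> try (exfalso; omega)
  · rw [show n - 1 = (m - 1) + (n - m) by omega, pow_add]
    ring
  · rw [show n - (k : ℕ) - 1 = (m - k - 1) + (n - m) by omega, pow_add]
    ring
  · rw [show n - (k : ℕ) - 1 = n - m - 1 by omega]
    ring
  all_goals ring
end

section
/- For the vector ζ^{(0,n)} ∈ ℂ^{N+1} with α₀ in position 0 and α₁ in position n (1 ≤ n ≤ N), the product U₁^σ⋯U_N^σ ζ^{(0,n)} has k-th component: k=0: c^N[(gz)^N α₀ + (gz)^{n-1} gw α₁]; 1 ≤ k < n: c^N[(gz)^{N-k} gw α₀ + (gz)^{n-k-1}(gw)² α₁]; k=n: c^N[(gz)^{N-n} gw α₀ + g z⁻ α₁]; n < k ≤ N: c^N (gz)^{N-k} gw α₀. -/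
lemma sum_ite_val {N : ℕ} (x : Fin (N+1) → ℂ) (p : ℕ) (hp : p < N+1) (a : ℂ) :
    ∑ j : Fin (N+1), (if (j:ℕ) = p then a else 0) * x j = a * x ⟨p, hp⟩ := by
  rw [Finset.sum_eq_single (⟨p, hp⟩ : Fin (N+1))]
  · simp
  · intro b _ hb
    rw [if_neg, zero_mul]
    exact fun h => hb (Fin.ext h)
  · simp

lemma mulVec_Umat (N ℓ : ℕ) (hℓ : 1 ≤ ℓ) (hℓN : ℓ ≤ N) (c g w z zm : ℂ)
    (x : Fin (N+1) → ℂ) (k : Fin (N+1)) :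
    Matrix.mulVec (Umat N ℓ c g w z zm) x k =
      if (k:ℕ) = 0 then c*g*(z * x ⟨0, by omega⟩ + w * x ⟨ℓ, by omega⟩)
      else if (k:ℕ) = ℓ then c*g*(w * x ⟨0, by omega⟩ + zm * x ⟨ℓ, by omega⟩)
      else c * x k := by
  simp only [Matrix.mulVec, dotProduct, Umat]
  by_cases hk0 : (k:ℕ) = 0
  · simp only [hk0, if_pos rfl, if_true]
    have hterm : ∀ j : Fin (N+1),
        c*g*((if (j:ℕ)=0 then z else 0)+(if (j:ℕ)=ℓ then w else 0)) * x j
        = (if (j:ℕ)=0 then (c*g*z) else 0) * x j + (if (j:ℕ)=ℓ then (c*g*w) else 0) * x j := by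
      intro j; split <;> split <;> ring
    rw [Finset.sum_congr rfl (fun j _ => hterm j), Finset.sum_add_distrib,
      sum_ite_val x 0 (by omega), sum_ite_val x ℓ (by omega)]
    ring
  · simp only [if_neg hk0]
    by_cases hkℓ : (k:ℕ) = ℓ
    · simp only [hkℓ, if_pos rfl, if_true]
      have hterm : ∀ j : Fin (N+1),
          c*g*((if (j:ℕ)=0 then w else 0)+(if (j:ℕ)=ℓ then zm else 0)) * x j
          = (if (j:ℕ)=0 then (c*g*w) else 0) * x j + (if (j:ℕ)=ℓ then (c*g*zm) else 0) * x j := by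
        intro j; split <;> split <;> ring
      rw [Finset.sum_congr rfl (fun j _ => hterm j), Finset.sum_add_distrib,
        sum_ite_val x 0 (by omega), sum_ite_val x ℓ (by omega)]
      ring
    · simp only [if_neg hkℓ]
      rw [Finset.sum_eq_single k]
      · simp
      · intro b _ hb
        rw [if_neg (fun h => hb h.symm), zero_mul]
      · simp

def Vvec (N n : ℕ) (c g w z zm α₀ α₁ : ℂ) (m : ℕ) : Fin (N+1) → ℂ := fun k =>
  if (k:ℕ) = 0 then
    c^(N-m) * ((g*z)^(N-m) * α₀ + (if m < n then (g*z)^(n-m-1)*(g*w)*α₁ else 0))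
  else if (k:ℕ) ≤ m then (if (k:ℕ) = n then c^(N-m) * α₁ else 0)
  else if (k:ℕ) < n then
    c^(N-m)*((g*z)^(N-(k:ℕ))*(g*w)*α₀ + (g*z)^(n-(k:ℕ)-1)*(g*w)^2*α₁)
  else if (k:ℕ) = n then c^(N-m)*((g*z)^(N-n)*(g*w)*α₀ + g*zm*α₁)
  else c^(N-m)*(g*z)^(N-(k:ℕ))*(g*w)*α₀

lemma key (N n : ℕ) (hn : 1 ≤ n) (hnN : n ≤ N) (c g w z zm α₀ α₁ : ℂ) :
    ∀ t m, m + t = N →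
      Matrix.mulVec (((List.range t).map (fun i => Umat N (m + i + 1) c g w z zm)).prod)
          (fun j => if (j : ℕ) = 0 then α₀ else if (j : ℕ) = n then α₁ else 0)
        = Vvec N n c g w z zm α₀ α₁ m := by
  intro t
  induction t with
  | zero =>
    intro m hm
    funext k
    simp only [List.range_zero, List.map_nil, List.prod_nil, Matrix.one_mulVec, Vvec]
    subst hm
    split_ifs <;> simp_all <;> omega
  | succ t ih =>
    intro m hm
    have hmN : m < N := by omega
    rw [List.range_succ_eq_map, List.map_cons, List.prod_cons, List.map_map,
      ← Matrix.mulVec_mulVec]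
    have hmap : ((fun i => Umat N (m + i + 1) c g w z zm) ∘ Nat.succ)
        = fun i => Umat N ((m+1) + i + 1) c g w z zm := by
      funext i; simp [Function.comp, Nat.succ_eq_add_one]; ring_nf
    rw [hmap, ih (m+1) (by omega)]
    funext k
    rw [mulVec_Umat N (m+1) (by omega) (by omega)]
    -- values of Vvec (m+1) at 0 and at m+1
    have h0 : Vvec N n c g w z zm α₀ α₁ (m+1) ⟨0, by omega⟩
        = c^(N-(m+1)) * ((g*z)^(N-(m+1)) * α₀
            + (if m+1 < n then (g*z)^(n-(m+1)-1)*(g*w)*α₁ else 0)) := by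
      simp [Vvec]
    have h1 : Vvec N n c g w z zm α₀ α₁ (m+1) ⟨m+1, by omega⟩
        = (if m+1 = n then c^(N-(m+1)) * α₁ else 0) := by
      simp only [Vvec]
      rw [if_neg (by simp), if_pos (by simp)]
    rw [h0, h1]
    have hc : c^(N-m) = c^(N-(m+1)) * c := by
      rw [← pow_succ]; congr 1; omega
    have hgz : (g*z)^(N-m) = (g*z)^(N-(m+1)) * (g*z) := by
      rw [← pow_succ]; congr 1; omega
    by_cases hk0 : (k:ℕ) = 0
    · rw [if_pos hk0]
      simp only [Vvec, hk0, if_pos rfl, reduceIte]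
      by_cases h1n : m + 1 < n
      · rw [if_pos h1n, if_neg (by omega), if_pos (by omega)]
        have : (g*z)^(n-m-1) = (g*z)^(n-(m+1)-1) * (g*z) := by
          rw [← pow_succ]; congr 1; omega
        rw [hc, hgz, this]; ring
      · by_cases h2n : m + 1 = n
        · rw [if_neg h1n, if_pos h2n, if_pos (by omega)]
          have : n - m - 1 = 0 := by omega
          rw [hc, hgz, this]; ring_nf
        · rw [if_neg h1n, if_neg h2n, if_neg (by omega)]
          rw [hc, hgz]; ring
    · rw [if_neg hk0]
      by_cases hkm : (k:ℕ) = m + 1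
      · rw [if_pos hkm]
        have hle : ¬ (k:ℕ) ≤ m := by omega
        simp only [Vvec, if_neg hk0, if_neg hle]
        by_cases h1n : m + 1 < n
        · rw [if_neg (show ¬ m+1 = n by omega), if_pos (show (k:ℕ) < n by omega),
            if_pos h1n]
          have hN : N - (m+1) = N - (k:ℕ) := by omega
          have hn2 : n - (m+1) - 1 = n - (k:ℕ) - 1 := by omega
          rw [hc, hN, hn2]; ring
        · by_cases h2n : m + 1 = n
          · rw [if_pos h2n, if_neg (show ¬ (k:ℕ) < n by omega),
              if_pos (show (k:ℕ) = n by omega), if_neg h1n]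
            have hN : N - (m+1) = N - n := by omega
            rw [hc, hN]; ring
          · rw [if_neg h2n, if_neg (show ¬ (k:ℕ) < n by omega),
              if_neg (show ¬ (k:ℕ) = n by omega), if_neg h1n]
            have hN : N - (m+1) = N - (k:ℕ) := by omega
            rw [hc, hN]; ring
      · rw [if_neg hkm]
        simp only [Vvec, if_neg hk0]
        by_cases hkle : (k:ℕ) ≤ m
        · rw [if_pos hkle, if_pos (by omega)]
          by_cases hkn : (k:ℕ) = n
          · rw [if_pos hkn, if_pos hkn, hc]; ring
          · rw [if_neg hkn, if_neg hkn]; ring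
        · rw [if_neg hkle, if_neg (by omega)]
          by_cases hkn : (k:ℕ) < n
          · rw [if_pos hkn, if_pos hkn, hc]; ring
          · rw [if_neg hkn, if_neg hkn]
            by_cases hkn2 : (k:ℕ) = n
            · rw [if_pos hkn2, if_pos hkn2, hc]; ring
            · rw [if_neg hkn2, if_neg hkn2, hc]; ring

/-- components of `U₁^σ⋯U_N^σ ζ^{(0,n)}`, where `ζ^{(0,n)}` has `α₀`
at position `0`, `α₁` at position `n` (`1 ≤ n ≤ N`) and zeros elsewhere. -/
theorem Umat_prod_zeta_0n (N n : ℕ) (hn : 1 ≤ n) (hnN : n ≤ N)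
    (c g w z zm : ℂ) (α₀ α₁ : ℂ) (k : Fin (N + 1)) :
    Matrix.mulVec (((List.range N).map (fun ℓ => Umat N (ℓ + 1) c g w z zm)).prod)
        (fun j => if (j : ℕ) = 0 then α₀ else if (j : ℕ) = n then α₁ else 0) k
      = if (k : ℕ) = 0 then
          c ^ N * ((g * z) ^ N * α₀ + (g * z) ^ (n - 1) * (g * w) * α₁)
        else if (k : ℕ) < n then
          c ^ N * ((g * z) ^ (N - (k : ℕ)) * (g * w) * α₀
            + (g * z) ^ (n - (k : ℕ) - 1) * (g * w) ^ 2 * α₁)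
        else if (k : ℕ) = n then
          c ^ N * ((g * z) ^ (N - n) * (g * w) * α₀ + g * zm * α₁)
        else
          c ^ N * (g * z) ^ (N - (k : ℕ)) * (g * w) * α₀ := by
  have hmap : (fun ℓ => Umat N (ℓ + 1) c g w z zm)
      = fun i => Umat N (0 + i + 1) c g w z zm := by
    funext i; simp
  rw [hmap, key N n hn hnN c g w z zm α₀ α₁ N 0 (by omega)]
  simp only [Vvec, Nat.sub_zero, Nat.zero_add]
  by_cases hk0 : (k:ℕ) = 0
  · rw [if_pos hk0, if_pos hk0, if_pos (by omega)]
  · rw [if_neg hk0, if_neg hk0, if_neg (show ¬ (k:ℕ) ≤ 0 by omega)]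
end
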